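/- If a graph H with m edges satisfies t(H,W) + t(H,1−W) ≥ 2^{1−m} for all graphons W, and I_1, I_2 are independent sets at successive stages (I_1 independent in H, and I_2 independent in H_{I_1}^q), then the iterated book (H_{I_1}^q)_{I_2}^{q'} is common with q·q'·m edges. -/

import Mathlib

open MeasureTheory

abbrev unitI : Type := Set.Icc (0:ℝ) 1

structure Graphon where
  W : unitI → unitI → ℝ
  symm : ∀ x y, W x y = W y x
  measurable : Measurable fun p : unitI × unitI => W p.1 p.2
  nonneg : ∀ x y, 0 ≤ W x y
  le_one : ∀ x y, W x y ≤ 1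

def Graphon.compl (W : Graphon) : Graphon where
  W x y := 1 - W.W x y
  symm x y := by show 1 - W.W x y = 1 - W.W y x; rw [W.symm]
  measurable := measurable_const.sub W.measurable
  nonneg x y := by show 0 ≤ 1 - W.W x y; linarith [W.le_one x y]
  le_one x y := by show 1 - W.W x y ≤ 1; linarith [W.nonneg x y]

noncomputable def homDensity {V : Type} [Fintype V] (H : SimpleGraph V) (W : Graphon) : ℝ :=
  ∫ x : V → unitI,
    ∏ᶠ (e : Sym2 V) (_ : e ∈ H.edgeSet),
      Sym2.lift ⟨fun u v => W.W (x u) (x v), fun u v => W.symm (x u) (x v)⟩ e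

def IsCommon {V : Type} [Fintype V] (H : SimpleGraph V) : Prop :=
  ∀ W : Graphon,
    (2:ℝ) ^ (1 - (Nat.card H.edgeSet : ℤ)) ≤ homDensity H W + homDensity H W.compl

/-- Vertex set of the `q`-book of a graph on `V` along `I`. -/
abbrev BookVerts (V : Type) [DecidableEq V] (I : Finset V) (q : ℕ) : Type :=
  {v : V // v ∈ I} ⊕ (Fin q × {v : V // v ∉ I})

/-- The canonical embedding of the `j`-th page. -/
def bookEmb {V : Type} [DecidableEq V] (I : Finset V) (q : ℕ) (j : Fin q) (v : V) :
    BookVerts V I q :=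
  if h : v ∈ I then Sum.inl ⟨v, h⟩ else Sum.inr (j, ⟨v, h⟩)

lemma bookEmb_injective {V : Type} [DecidableEq V] (I : Finset V) (q : ℕ) (j : Fin q) :
    Function.Injective (bookEmb I q j) := by
  intro a b hab
  unfold bookEmb at hab
  split_ifs at hab with h1 h2 h2 <;> simp_all

/-- The `q`-book of `H` along `I`. -/
def book {V : Type} [DecidableEq V] (H : SimpleGraph V) (I : Finset V) (q : ℕ) :
    SimpleGraph (BookVerts V I q) where
  Adj a b := ∃ (j : Fin q) (u v : V), H.Adj u v ∧ a = bookEmb I q j u ∧ b = bookEmb I q j v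
  symm := ⟨by rintro a b ⟨j, u, v, h, ha, hb⟩; exact ⟨j, v, u, h.symm, hb, ha⟩⟩
  loopless := ⟨by
    rintro a ⟨j, u, v, h, ha, hb⟩
    exact H.loopless.irrefl v (by rwa [bookEmb_injective I q j (ha.symm.trans hb ▸ rfl : bookEmb I q j u = bookEmb I q j v)] at h)⟩

/-- `I` is an independent set of `H`. -/
def IndepIn {V : Type} (H : SimpleGraph V) (I : Finset V) : Prop :=
  ∀ u ∈ I, ∀ v ∈ I, ¬ H.Adj u v

/-!
Condition on the labels `x ∈ [0,1]^I` of the spine `I`. Given `x`, the `q` pages of the book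
`H_I^q` are labelled independently, so `t(H_I^q, W) = ∫ t_x(H, W)^q dx`, where the rooted density
`t_x(H, W)` is the density of `H` with the vertices of `I` pinned to `x`; its integral over `x` is
`t(H, W)`. Jensen's inequality gives `∫ t_x^q ≥ t(H, W)^q`, and convexity of `a ↦ a^q` gives
`a^q + b^q ≥ 2^{1-q} (a + b)^q`. Hence if `H` is common with `m` edges, then
`t(H_I^q, W) + t(H_I^q, 1 - W) ≥ 2^{1-q} (2^{1-m})^q = 2^{1-qm}`: books of common graphs along
independent sets are common, and the iterated book is common by applying this twice.
-/

section IntegralPi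

variable {α : Type*} [MeasureSpace α]

lemma volume_measurePreserving_curry [IsProbabilityMeasure (volume : Measure α)]
    (ι κ : Type*) [Fintype ι] [Fintype κ] :
    MeasurePreserving (MeasurableEquiv.curry ι κ α) volume volume := by
  refine ⟨(MeasurableEquiv.curry ι κ α).measurable, ?_⟩
  simp only [volume_pi, ← Measure.infinitePi_eq_pi]
  exact Measure.infinitePi_map_curry fun _ _ => volume

lemma integral_eq_integral_sumElim [SigmaFinite (volume : Measure α)] {ι κ : Type*}
    [Fintype ι] [Fintype κ] {F : (ι ⊕ κ → α) → ℝ} (hF : Integrable F) :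
    ∫ X, F X = ∫ x : ι → α, ∫ y : κ → α, F (Sum.elim x y) := by
  have hmp := volume_measurePreserving_sumPiEquivProdPi_symm fun _ : ι ⊕ κ => α
  rw [← hmp.integral_comp', Measure.volume_eq_prod, integral_prod]
  · rfl
  · exact hmp.integrable_comp_emb (MeasurableEquiv.measurableEmbedding _) |>.2 hF

variable {V : Type} [DecidableEq V]

def glue (I : Finset V) (x : {v // v ∈ I} → α) (y : {v // v ∉ I} → α) : V → α :=
  (Equiv.piEquivPiSubtypeProd (· ∈ I) fun _ => α).symm (x, y)

lemma measurable_glue (I : Finset V) :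
    Measurable fun p : ({v // v ∈ I} → α) × ({v // v ∉ I} → α) => glue I p.1 p.2 :=
  measurable_piEquivPiSubtypeProd_symm _ _

lemma integral_eq_integral_glue [Fintype V] [SigmaFinite (volume : Measure α)] (I : Finset V)
    {F : (V → α) → ℝ} (hF : Integrable F) :
    ∫ X, F X = ∫ x : {v // v ∈ I} → α, ∫ y : {v // v ∉ I} → α, F (glue I x y) := by
  have hmp := (volume_preserving_piEquivPiSubtypeProd (fun _ : V => α) (· ∈ I)).symm
  rw [← hmp.integral_comp', Measure.volume_eq_prod, integral_prod]
  -- the `Fintype` instances on `{v // v ∈ I}` from `Subtype` and from `Finset` differ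
  · congr!
  · exact hmp.integrable_comp_emb (MeasurableEquiv.measurableEmbedding _) |>.2 hF

omit [MeasureSpace α] in
lemma glue_comp_bookEmb (I : Finset V) (q : ℕ) (X : BookVerts V I q → α) (j : Fin q) :
    X ∘ bookEmb I q j = glue I (X ∘ Sum.inl) fun v => X (Sum.inr (j, v)) := by
  funext v
  by_cases hv : v ∈ I <;> simp [glue, bookEmb, hv]

lemma integral_prod_comp_bookEmb [Fintype V] [IsProbabilityMeasure (volume : Measure α)]
    (I : Finset V) (q : ℕ) {F : (V → α) → ℝ} (hF : Measurable F) (hF1 : ∀ X, ‖F X‖ ≤ 1) :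
    ∫ X : BookVerts V I q → α, ∏ j, F (X ∘ bookEmb I q j)
      = ∫ x : {v // v ∈ I} → α, (∫ y : {v // v ∉ I} → α, F (glue I x y)) ^ q := by
  have hint : Integrable fun X : BookVerts V I q → α => ∏ j, F (X ∘ bookEmb I q j) := by
    refine .of_bound (Finset.measurable_prod _ fun j _ => ?_).aestronglyMeasurable 1
      (ae_of_all _ fun X => ?_)
    · exact hF.comp (measurable_pi_lambda _ fun v => measurable_pi_apply _)
    · rw [norm_prod]
      exact Finset.prod_le_one (fun _ _ => norm_nonneg _) fun _ _ => hF1 _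
  rw [integral_eq_integral_sumElim hint]
  refine congrArg _ (funext fun x => ?_)
  simp only [glue_comp_bookEmb, Sum.elim_comp_inl, Sum.elim_inr]
  refine ((volume_measurePreserving_curry (Fin q) {v // v ∉ I}).integral_comp'
    (g := fun Y => ∏ j, F (glue I x (Y j)))).trans ?_
  rw [integral_fintype_prod_volume_eq_pow fun y => F (glue I x y), Fintype.card_fin]

end IntegralPi

section BookEdges

variable {V : Type} [DecidableEq V] {H : SimpleGraph V} {I : Finset V} {q : ℕ}

lemma bookEmb_eq_bookEmb {j j' : Fin q} {a b : V} (h : bookEmb I q j a = bookEmb I q j' b) :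
    a = b ∧ (a ∉ I → j = j') := by
  unfold bookEmb at h
  split_ifs at h <;> simp_all

lemma mem_edgeSet_book {e' : Sym2 (BookVerts V I q)} :
    e' ∈ (book H I q).edgeSet ↔ ∃ j, ∃ e ∈ H.edgeSet, e.map (bookEmb I q j) = e' := by
  constructor
  · induction e' using Sym2.ind with
    | _ a b =>
      rintro ⟨j, u, v, huv, rfl, rfl⟩
      exact ⟨j, s(u, v), huv, rfl⟩
  · rintro ⟨j, e, he, rfl⟩
    induction e using Sym2.ind with
    | _ u v => exact ⟨j, u, v, he, rfl, rfl⟩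

lemma map_bookEmb_injective (hI : IndepIn H I) {j j' : Fin q} {e e' : Sym2 V}
    (he : e ∈ H.edgeSet) (h : e.map (bookEmb I q j) = e'.map (bookEmb I q j')) :
    j = j' ∧ e = e' := by
  induction e using Sym2.ind with
  | _ u v =>
  induction e' using Sym2.ind with
  | _ u' v' =>
    have houtside : u ∉ I ∨ v ∉ I := by
      by_contra! h
      exact hI u h.1 v h.2 he
    rw [Sym2.map_mk, Sym2.map_mk, Sym2.eq_iff] at h
    rcases h with ⟨hu, hv⟩ | ⟨hu, hv⟩
    · obtain ⟨rfl, hju⟩ := bookEmb_eq_bookEmb hu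
      obtain ⟨rfl, hjv⟩ := bookEmb_eq_bookEmb hv
      exact ⟨houtside.elim hju hjv, rfl⟩
    · obtain ⟨rfl, hju⟩ := bookEmb_eq_bookEmb hu
      obtain ⟨rfl, hjv⟩ := bookEmb_eq_bookEmb hv
      exact ⟨houtside.elim hju hjv, Sym2.eq_swap⟩

noncomputable def bookEdgeEquiv (hI : IndepIn H I) : Fin q × H.edgeSet ≃ (book H I q).edgeSet :=
  Equiv.ofBijective
    (fun p => ⟨p.2.1.map (bookEmb I q p.1), mem_edgeSet_book.2 ⟨p.1, p.2.1, p.2.2, rfl⟩⟩)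
    ⟨fun ⟨j, e, he⟩ ⟨j', e', he'⟩ h => by
      obtain ⟨rfl, rfl⟩ := map_bookEmb_injective hI he (Subtype.ext_iff.1 h)
      rfl,
    fun ⟨e', he'⟩ => by
      obtain ⟨j, e, he, rfl⟩ := mem_edgeSet_book.1 he'
      exact ⟨(j, ⟨e, he⟩), rfl⟩⟩

lemma card_edgeSet_book [Fintype V] (hI : IndepIn H I) :
    Nat.card (book H I q).edgeSet = q * Nat.card H.edgeSet := by
  rw [← Nat.card_congr (bookEdgeEquiv hI), Nat.card_prod, Nat.card_fin]

end BookEdges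

namespace Graphon

variable (W : Graphon) {V : Type}

def edgeWeight (x : V → unitI) : Sym2 V → ℝ :=
  Sym2.lift ⟨fun u v => W.W (x u) (x v), fun u v => W.symm (x u) (x v)⟩

lemma edgeWeight_nonneg (x : V → unitI) (e : Sym2 V) : 0 ≤ W.edgeWeight x e := by
  induction e using Sym2.ind with
  | _ u v => exact W.nonneg _ _

lemma edgeWeight_le_one (x : V → unitI) (e : Sym2 V) : W.edgeWeight x e ≤ 1 := by
  induction e using Sym2.ind with
  | _ u v => exact W.le_one _ _

lemma measurable_edgeWeight (e : Sym2 V) : Measurable fun x : V → unitI => W.edgeWeight x e := by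
  induction e using Sym2.ind with
  | _ u v =>
    exact W.measurable.comp (f := fun x : V → unitI => (x u, x v))
      ((measurable_pi_apply u).prodMk (measurable_pi_apply v))

lemma edgeWeight_map {V' : Type} (x : V' → unitI) (f : V → V') (e : Sym2 V) :
    W.edgeWeight x (e.map f) = W.edgeWeight (x ∘ f) e := by
  induction e using Sym2.ind with
  | _ u v => rfl

end Graphon

section HomIntegrand

variable {V : Type} (H : SimpleGraph V) (W : Graphon)

noncomputable def homIntegrand (x : V → unitI) : ℝ :=
  ∏ᶠ e : H.edgeSet, W.edgeWeight x e

lemma homIntegrand_eq_prod [Fintype H.edgeSet] (x : V → unitI) :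
    homIntegrand H W x = ∏ e : H.edgeSet, W.edgeWeight x e :=
  finprod_eq_prod_of_fintype _

lemma homIntegrand_nonneg (x : V → unitI) : 0 ≤ homIntegrand H W x :=
  finprod_nonneg fun e => W.edgeWeight_nonneg x e

variable [Fintype V]

lemma homDensity_eq_integral_homIntegrand : homDensity H W = ∫ x, homIntegrand H W x := by
  simp only [homIntegrand, finprod_set_coe_eq_finprod_mem]
  rfl

lemma homIntegrand_le_one (x : V → unitI) : homIntegrand H W x ≤ 1 := by
  have := Fintype.ofFinite H.edgeSet
  rw [homIntegrand_eq_prod]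
  exact Finset.prod_le_one (fun e _ => W.edgeWeight_nonneg x e) fun e _ => W.edgeWeight_le_one x e

lemma norm_homIntegrand_le_one (x : V → unitI) : ‖homIntegrand H W x‖ ≤ 1 := by
  rw [Real.norm_of_nonneg (homIntegrand_nonneg H W x)]
  exact homIntegrand_le_one H W x

lemma measurable_homIntegrand : Measurable (homIntegrand H W) := by
  have := Fintype.ofFinite H.edgeSet
  simp only [funext (homIntegrand_eq_prod H W)]
  exact Finset.measurable_prod _ fun e _ => W.measurable_edgeWeight e.1

lemma integrable_homIntegrand {μ : Measure (V → unitI)} [IsFiniteMeasure μ] :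
    Integrable (homIntegrand H W) μ :=
  .of_bound (measurable_homIntegrand H W).aestronglyMeasurable 1
    (ae_of_all _ (norm_homIntegrand_le_one H W))

lemma homIntegrand_book [DecidableEq V] {I : Finset V} (hI : IndepIn H I) (q : ℕ)
    (X : BookVerts V I q → unitI) :
    homIntegrand (book H I q) W X = ∏ j, homIntegrand H W (X ∘ bookEmb I q j) := by
  have := Fintype.ofFinite H.edgeSet
  rw [homIntegrand, ← finprod_comp_equiv (bookEdgeEquiv hI), finprod_eq_prod_of_fintype,
    Fintype.prod_prod_type]
  simp only [homIntegrand_eq_prod]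
  exact Finset.prod_congr rfl fun j _ =>
    Finset.prod_congr rfl fun e _ => W.edgeWeight_map X _ e.1

end HomIntegrand

section RootedDensity

variable {V : Type} [Fintype V] [DecidableEq V] (H : SimpleGraph V) (W : Graphon) (I : Finset V)

noncomputable def rootedDensity (x : {v // v ∈ I} → unitI) : ℝ :=
  ∫ y, homIntegrand H W (glue I x y)

lemma rootedDensity_nonneg (x : {v // v ∈ I} → unitI) : 0 ≤ rootedDensity H W I x :=
  integral_nonneg fun _ => homIntegrand_nonneg H W _

lemma rootedDensity_le_one (x : {v // v ∈ I} → unitI) : rootedDensity H W I x ≤ 1 := by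
  refine (integral_mono ?_ (integrable_const 1) fun _ => homIntegrand_le_one H W _).trans ?_
  · exact .of_bound ((measurable_homIntegrand H W).comp
      ((measurable_glue I).comp measurable_prodMk_left)).aestronglyMeasurable 1
      (ae_of_all _ fun _ => norm_homIntegrand_le_one H W _)
  · simp

lemma measurable_rootedDensity : Measurable (rootedDensity H W I) :=
  ((measurable_homIntegrand H W).comp (measurable_glue I)).stronglyMeasurable
    |>.integral_prod_right'.measurable

lemma integrable_rootedDensity_pow (n : ℕ) :
    Integrable fun x => rootedDensity H W I x ^ n :=
  .of_bound ((measurable_rootedDensity H W I).pow_const n).aestronglyMeasurable 1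
    (ae_of_all _ fun x => by
      rw [norm_pow, Real.norm_of_nonneg (rootedDensity_nonneg H W I x)]
      exact pow_le_one₀ (rootedDensity_nonneg H W I x) (rootedDensity_le_one H W I x))

lemma homDensity_eq_integral_rootedDensity :
    homDensity H W = ∫ x, rootedDensity H W I x := by
  rw [homDensity_eq_integral_homIntegrand,
    integral_eq_integral_glue I (integrable_homIntegrand H W)]
  rfl

lemma homDensity_book (hI : IndepIn H I) (q : ℕ) :
    homDensity (book H I q) W = ∫ x, rootedDensity H W I x ^ q := by
  rw [homDensity_eq_integral_homIntegrand]
  simp only [homIntegrand_book H W hI q]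
  exact integral_prod_comp_bookEmb I q (measurable_homIntegrand H W) (norm_homIntegrand_le_one H W)

end RootedDensity

lemma pow_integral_le_integral_pow {X : Type*} [MeasurableSpace X] {μ : Measure X}
    [IsProbabilityMeasure μ] {f : X → ℝ} (q : ℕ) (hf0 : ∀ᵐ x ∂μ, 0 ≤ f x)
    (hf : Integrable f μ) (hfq : Integrable (fun x => f x ^ q) μ) :
    (∫ x, f x ∂μ) ^ q ≤ ∫ x, f x ^ q ∂μ :=
  (convexOn_pow q).map_integral_le (continuous_pow q).continuousOn isClosed_Ici hf0 hf hfq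

lemma two_zpow_one_sub_mul_add_pow_le {a b : ℝ} (ha : 0 ≤ a) (hb : 0 ≤ b) (q : ℕ) :
    (2 : ℝ) ^ (1 - (q : ℤ)) * (a + b) ^ q ≤ a ^ q + b ^ q := by
  rcases q with _ | n
  · norm_num
  · rw [show 1 - ((n + 1 : ℕ) : ℤ) = -n by push_cast; ring, zpow_neg, zpow_natCast,
      inv_mul_le_iff₀ (by positivity)]
    simpa using add_pow_le ha hb (n + 1)

theorem IsCommon.book {V : Type} [Fintype V] [DecidableEq V] {H : SimpleGraph V}
    (hH : IsCommon H) {I : Finset V} (hI : IndepIn H I) (q : ℕ) : IsCommon (book H I q) := by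
  intro W
  have hD := integrable_rootedDensity_pow H W I
  have hD' := integrable_rootedDensity_pow H W.compl I
  rw [card_edgeSet_book hI, homDensity_book H W I hI, homDensity_book H W.compl I hI]
  calc (2 : ℝ) ^ (1 - ((q * Nat.card H.edgeSet : ℕ) : ℤ))
      = 2 ^ (1 - (q : ℤ)) * (2 ^ (1 - (Nat.card H.edgeSet : ℤ))) ^ q := by
        rw [← zpow_natCast _ q, ← zpow_mul, ← zpow_add₀ two_ne_zero]
        push_cast
        ring_nf
    _ ≤ 2 ^ (1 - (q : ℤ)) * (homDensity H W + homDensity H W.compl) ^ q := by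
        gcongr
        exact hH W
    _ ≤ (∫ x, rootedDensity H W I x) ^ q + (∫ x, rootedDensity H W.compl I x) ^ q := by
        rw [homDensity_eq_integral_rootedDensity H W I,
          homDensity_eq_integral_rootedDensity H W.compl I]
        exact two_zpow_one_sub_mul_add_pow_le (integral_nonneg (rootedDensity_nonneg H W I))
          (integral_nonneg (rootedDensity_nonneg H W.compl I)) q
    _ ≤ (∫ x, rootedDensity H W I x ^ q) + ∫ x, rootedDensity H W.compl I x ^ q := by
        gcongr
        · exact pow_integral_le_integral_pow q (ae_of_all _ (rootedDensity_nonneg H W I))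
            (by simpa using hD 1) (hD q)
        · exact pow_integral_le_integral_pow q (ae_of_all _ (rootedDensity_nonneg H W.compl I))
            (by simpa using hD' 1) (hD' q)

theorem iterated_book_common_general {V : Type} [Fintype V] [DecidableEq V]
    (H : SimpleGraph V) (m : ℕ) (hm : Nat.card H.edgeSet = m)
    (hcommon : ∀ W : Graphon,
      (2:ℝ) ^ (1 - (m:ℤ)) ≤ homDensity H W + homDensity H W.compl)
    (q q' : ℕ)
    (I₁ : Finset V) (hI₁ : IndepIn H I₁)
    (I₂ : Finset (BookVerts V I₁ q)) (hI₂ : IndepIn (book H I₁ q) I₂) :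
    IsCommon (book (book H I₁ q) I₂ q') ∧
      Nat.card (book (book H I₁ q) I₂ q').edgeSet = q * q' * m := by
  have hH : IsCommon H := by simpa only [IsCommon, hm] using hcommon
  refine ⟨(hH.book hI₁ q).book hI₂ q', ?_⟩
  rw [card_edgeSet_book hI₂, card_edgeSet_book hI₁, hm]
  ring

/-- commonality is preserved under iterating the book operation:
if `H` with `m` edges satisfies the commonality inequality, then the iterated
book `(H_{I₁}^q)_{I₂}^{q'}` is common and has `q·q'·m` edges. -/
theorem iterated_book_common {V : Type} [Fintype V] [DecidableEq V]
    (H : SimpleGraph V) (m : ℕ) (hm : Nat.card H.edgeSet = m)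
    (hcommon : ∀ W : Graphon,
      (2:ℝ) ^ (1 - (m:ℤ)) ≤ homDensity H W + homDensity H W.compl)
    (q q' : ℕ) (hq : 0 < q) (hq' : 0 < q')
    (I₁ : Finset V) (hI₁ : IndepIn H I₁)
    (I₂ : Finset (BookVerts V I₁ q)) (hI₂ : IndepIn (book H I₁ q) I₂) :
    IsCommon (book (book H I₁ q) I₂ q') ∧
      Nat.card (book (book H I₁ q) I₂ q').edgeSet = q * q' * m :=
  iterated_book_common_general H m hm hcommon q q' I₁ hI₁ I₂ hI₂
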